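/- arXiv:2301.13227 — 3 statements merged into one kernel-verified Lean document; each statement's English description precedes it below -/
import Mathlib

section
/- Let π' : ℂ((t)) → H' be the projection killing the constant term, and for f ∈ ℂ((t)) define T_f ∈ End(H') by T_f(g) = π'(f·g'). Then: (i) the map f ↦ T_f is ℂ-linear and injective; (ii) each T_f is skew-adjoint for the residue pairing restricted to H', i.e. ⟨T_f(g), h⟩ + ⟨g, T_f(h)⟩ = 0 for g,h ∈ H'; and (iii) [T_f, T_h] = T_{f·h' − h·f'} for all f,h ∈ ℂ((t)). In other words, the oscillator representation τ is an injective Lie algebra homomorphism from the Witt algebra of derivations f∂_t of ℂ((t)) into the symplectic algebra sp(H'). -/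
/-!
The operator `D` is a derivation: writing it as `t⁻¹ · E` with the Euler operator
`E = t d/dt`, which multiplies the `n`-th coefficient by `n`, the Leibniz rule becomes the
termwise identity `n = i + j` on the antidiagonal. Moreover an exact series `D x` has no
residue. The projection `π'` only subtracts a constant, which `D` kills and which pairs to
zero against any derivative, so it is invisible both inside `T_f ∘ T_h` and in the pairing.
Skew-adjointness is then the vanishing of the residue of `D (f g h')`, the commutator formula
is the Leibniz rule, and `f` is recovered from `T_f (t) = π' f` and `T_f (t²) = π' (2 t f)`.
-/

open HahnSeries

/-- Formal derivative on Laurent series: `(D f).coeff n = (n+1) * f.coeff (n+1)`. -/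
noncomputable def D (f : LaurentSeries ℂ) : LaurentSeries ℂ where
  coeff := fun n => ((n + 1 : ℤ) : ℂ) * f.coeff (n + 1)
  isPWO_support' := by
    have himg : (Function.support fun n : ℤ => ((n + 1 : ℤ) : ℂ) * f.coeff (n + 1)) ⊆
        (fun n : ℤ => n - 1) '' f.support := by
      intro n hn
      have h : f.coeff (n + 1) ≠ 0 := by
        intro h
        simp [Function.mem_support, h] at hn
      exact ⟨n + 1, h, by ring⟩
    exact (f.isPWO_support.image_of_monotone
      (fun a b hab => by simpa using sub_le_sub_right hab 1)).mono himg

/-- The residue pairing `⟨f,g⟩ = -Res_{t=0}(f·g')`, i.e. minus the coefficient of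
`t⁻¹` in `f * D g`. -/
noncomputable def resPair (f g : LaurentSeries ℂ) : ℂ := -((f * D g).coeff (-1))

/-- `H' ⊂ ℂ((t))`: the subspace of Laurent series with zero constant term. -/
noncomputable def Hprime : Submodule ℂ (LaurentSeries ℂ) where
  carrier := {f | f.coeff 0 = 0}
  zero_mem' := by simp
  add_mem' := by
    intro a b ha hb
    simp only [Set.mem_setOf_eq, HahnSeries.coeff_add] at *
    simp [ha, hb]
  smul_mem' := by
    intro c f hf
    simp only [Set.mem_setOf_eq, HahnSeries.coeff_smul] at *
    simp [hf]

/-- The projection `π' : ℂ((t)) → H'` killing the constant term. -/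
noncomputable def proj0 (f : LaurentSeries ℂ) : Hprime :=
  ⟨f - HahnSeries.C (f.coeff 0), by
    have : (f - HahnSeries.C (f.coeff 0)).coeff (0 : ℤ) = 0 := by
      simp [HahnSeries.coeff_sub, HahnSeries.C_apply, HahnSeries.coeff_single_same]
    exact this⟩

/-- The oscillator operator `T_f : H' → H'`, `T_f(g) = π'(f·g')`. -/
noncomputable def T (f : LaurentSeries ℂ) (g : Hprime) : Hprime :=
  proj0 (f * D (g : LaurentSeries ℂ))

lemma coeff_D (f : LaurentSeries ℂ) (n : ℤ) :
    (D f).coeff n = ((n + 1 : ℤ) : ℂ) * f.coeff (n + 1) := rfl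

noncomputable def euler (f : LaurentSeries ℂ) : LaurentSeries ℂ where
  coeff n := (n : ℂ) * f.coeff n
  isPWO_support' := f.isPWO_support.mono fun _ hn => right_ne_zero_of_mul hn

lemma coeff_euler (f : LaurentSeries ℂ) (n : ℤ) :
    (euler f).coeff n = (n : ℂ) * f.coeff n := rfl

lemma support_euler_subset (f : LaurentSeries ℂ) : (euler f).support ⊆ f.support :=
  fun _ hn => right_ne_zero_of_mul hn

lemma euler_mul (x y : LaurentSeries ℂ) : euler (x * y) = euler x * y + x * euler y := by
  ext n
  rw [coeff_add, coeff_mul_left' x.isPWO_support (support_euler_subset x),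
    coeff_mul_right' y.isPWO_support (support_euler_subset y), coeff_euler, coeff_mul,
    Finset.mul_sum, ← Finset.sum_add_distrib]
  refine Finset.sum_congr rfl fun ⟨i, j⟩ hij => ?_
  have hn : (n : ℂ) = i + j := by
    rw [← (Finset.mem_antidiagonal.mp hij).2.2]
    push_cast
    ring
  rw [coeff_euler, coeff_euler, hn]
  ring

lemma D_eq_single_mul_euler (f : LaurentSeries ℂ) :
    D f = single (-1 : ℤ) (1 : ℂ) * euler f := by
  ext n
  rw [← sub_add_cancel n (-1), coeff_single_mul_add, one_mul, coeff_euler, coeff_D]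
  norm_num

lemma D_mul (x y : LaurentSeries ℂ) : D (x * y) = D x * y + x * D y := by
  simp only [D_eq_single_mul_euler, euler_mul]
  ring

lemma coeff_D_neg_one (x : LaurentSeries ℂ) : (D x).coeff (-1) = 0 := by
  simp [coeff_D]

lemma D_single (m : ℤ) (c : ℂ) : D (single m c) = single (m - 1) ((m : ℂ) * c) := by
  ext n
  rw [coeff_D]
  rcases eq_or_ne n (m - 1) with rfl | hn
  · simp
  · rw [coeff_single_of_ne hn, coeff_single_of_ne (by omega), mul_zero]

lemma coe_proj0 (f : LaurentSeries ℂ) : (proj0 f : LaurentSeries ℂ) = f - C (f.coeff 0) := rfl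

lemma coeff_proj0_of_ne {n : ℤ} (hn : n ≠ 0) (f : LaurentSeries ℂ) :
    (proj0 f : LaurentSeries ℂ).coeff n = f.coeff n := by
  rw [coe_proj0, coeff_sub, C_apply, coeff_single_of_ne hn, sub_zero]

noncomputable def proj0Linear : LaurentSeries ℂ →ₗ[ℂ] Hprime where
  toFun := proj0
  map_add' x y := Subtype.ext <| by
    simp only [Submodule.coe_add, coe_proj0, coeff_add, map_add]
    abel
  map_smul' c x := Subtype.ext <| by
    rw [RingHom.id_apply, SetLike.val_smul, coe_proj0, coe_proj0, coeff_smul, smul_eq_mul, map_mul,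
      C_mul_eq_smul, smul_sub]

lemma proj0Linear_apply (f : LaurentSeries ℂ) : proj0Linear f = proj0 f := rfl

lemma D_proj0 (f : LaurentSeries ℂ) : D (proj0 f : LaurentSeries ℂ) = D f := by
  ext n
  rw [coeff_D, coeff_D]
  rcases eq_or_ne (n + 1) 0 with hn | hn
  · rw [hn, Int.cast_zero, zero_mul, zero_mul]
  · rw [coeff_proj0_of_ne hn]

lemma resPair_proj0_left (x h : LaurentSeries ℂ) : resPair (proj0 x) h = resPair x h := by
  rw [resPair, resPair, coe_proj0, sub_mul, coeff_sub, C_mul_eq_smul, coeff_smul,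
    coeff_D_neg_one, smul_zero, sub_zero]

lemma resPair_proj0_right (g x : LaurentSeries ℂ) : resPair g (proj0 x) = resPair g x := by
  rw [resPair, resPair, D_proj0]

lemma resPair_mul_D_add_resPair_mul_D (f g h : LaurentSeries ℂ) :
    resPair (f * D g) h + resPair g (f * D h) = 0 := by
  have hexact : f * D g * D h + g * D (f * D h) = D (f * (g * D h)) := by
    simp only [D_mul]
    ring
  rw [resPair, resPair, ← neg_add, ← coeff_add, hexact, coeff_D_neg_one, neg_zero]

lemma T_apply (f : LaurentSeries ℂ) (g : Hprime) : T f g = proj0 (f * D g) := rfl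

lemma T_apply_T (f h : LaurentSeries ℂ) (k : Hprime) : T f (T h k) = proj0 (f * D (h * D k)) := by
  rw [T_apply, T_apply, D_proj0]

noncomputable def Hprime.single (m : ℤ) (hm : m ≠ 0) : Hprime :=
  ⟨HahnSeries.single m 1, coeff_single_of_ne hm.symm⟩

lemma coeff_T_single (f : LaurentSeries ℂ) {m n : ℤ} (hm : m ≠ 0) (hnm : n + (m - 1) ≠ 0) :
    (T f (Hprime.single m hm) : LaurentSeries ℂ).coeff (n + (m - 1)) = f.coeff n * m := by
  rw [T_apply, coeff_proj0_of_ne hnm, Hprime.single, D_single, mul_one, coeff_mul_single_add]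

lemma coeff_eq_of_T_eq {f g : LaurentSeries ℂ} (hfg : T f = T g) {m n : ℤ} (hm : m ≠ 0)
    (hnm : n + (m - 1) ≠ 0) : f.coeff n = g.coeff n := by
  have h := congrArg (fun S => (S (Hprime.single m hm) : LaurentSeries ℂ).coeff (n + (m - 1))) hfg
  simp only [coeff_T_single _ hm hnm] at h
  exact mul_right_cancel₀ (Int.cast_ne_zero.mpr hm) h

lemma T_injective : Function.Injective T := fun f g hfg => by
  ext n
  rcases eq_or_ne n 0 with rfl | hn
  · exact coeff_eq_of_T_eq hfg two_ne_zero (by norm_num)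
  · exact coeff_eq_of_T_eq hfg one_ne_zero (by simpa using hn)

/-- `f ↦ T_f` is ℂ-linear and injective, each `T_f` is skew-adjoint for
the residue pairing on `H'`, and `[T_f, T_h] = T_{f·h' − h·f'}`: the oscillator
representation is an injective Lie algebra map `Witt → sp(H')`. -/
theorem oscillator_representation :
    (∀ (a b : ℂ) (f g : LaurentSeries ℂ) (k : Hprime),
      T (a • f + b • g) k = a • T f k + b • T g k) ∧
    (∀ f g : LaurentSeries ℂ, T f = T g → f = g) ∧
    (∀ (f : LaurentSeries ℂ) (g h : Hprime),
      resPair (T f g : LaurentSeries ℂ) (h : LaurentSeries ℂ) +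
        resPair (g : LaurentSeries ℂ) (T f h : LaurentSeries ℂ) = 0) ∧
    (∀ (f h : LaurentSeries ℂ) (k : Hprime),
      T f (T h k) - T h (T f k) = T (f * D h - h * D f) k) := by
  refine ⟨fun a b f g k => ?_, fun _ _ hfg => T_injective hfg, fun f g h => ?_, fun f h k => ?_⟩
  · have hdistrib : (a • f + b • g) * D k = a • (f * D k) + b • (g * D k) := by
      simp only [← C_mul_eq_smul]
      ring
    rw [T_apply, T_apply, T_apply, hdistrib, ← proj0Linear_apply, ← proj0Linear_apply,
      ← proj0Linear_apply, map_add, map_smul, map_smul]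
  · rw [T_apply, T_apply, resPair_proj0_left, resPair_proj0_right,
      resPair_mul_D_add_resPair_mul_D]
  · rw [T_apply_T, T_apply_T, T_apply, ← proj0Linear_apply, ← proj0Linear_apply,
      ← proj0Linear_apply, ← map_sub proj0Linear, D_mul, D_mul]
    congr 1
    ring
end

section
/- Let L' ⊆ ℂ[t,t⁻¹] be the space of Laurent polynomials with zero constant term. Let 𝔤 ⊆ End(L' ⊕ ℂ) be the ℂ-linear span of the operators A_{f,g} : (k,c) ↦ (T_{f,g}(k), 0) for f,g ∈ L', together with the operators B_h : (k,c) ↦ (c·h, 0) for h ∈ L', where T_{f,g}(k) = ⟨f,k⟩·g + ⟨g,k⟩·f. Then 𝔤 is closed under the commutator bracket and is perfect: [𝔤, 𝔤] = 𝔤. (This realizes the identity S²(H'_f) ⋉ H'_f = [S²(H'_f) ⋉ H'_f, S²(H'_f) ⋉ H'_f] used to prove H¹(sp(H') ⋉ H', ℂ) = 0.) -/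
open HahnSeries

/-- `L' ⊂ ℂ((t))`: Laurent polynomials with zero constant term, viewed inside the
Laurent series. -/
noncomputable def Lprime : Submodule ℂ (LaurentSeries ℂ) where
  carrier := {f | f.coeff 0 = 0 ∧ f.support.Finite}
  zero_mem' := by
    refine ⟨by simp, ?_⟩
    simp [HahnSeries.support_zero]
  add_mem' := by
    rintro a b ⟨ha0, haf⟩ ⟨hb0, hbf⟩
    refine ⟨by simp [HahnSeries.coeff_add, ha0, hb0], ?_⟩
    refine Set.Finite.subset (haf.union hbf) ?_
    intro n hn
    simp only [HahnSeries.support, Function.mem_support, HahnSeries.coeff_add,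
      Set.mem_union] at hn ⊢
    by_contra h
    push_neg at h
    simp [h.1, h.2] at hn
  smul_mem' := by
    rintro c f ⟨hf0, hff⟩
    refine ⟨by simp [HahnSeries.coeff_smul, hf0], ?_⟩
    refine Set.Finite.subset hff ?_
    intro n hn
    simp only [HahnSeries.support, Function.mem_support, HahnSeries.coeff_smul] at hn ⊢
    intro h
    simp [h] at hn

/-- The operator `T_{f,g} : L' → L'`, `T_{f,g}(k) = ⟨f,k⟩g + ⟨g,k⟩f`. -/
noncomputable def TL (f g : Lprime) (k : Lprime) : Lprime :=
  resPair (f : LaurentSeries ℂ) (k : LaurentSeries ℂ) • g +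
    resPair (g : LaurentSeries ℂ) (k : LaurentSeries ℂ) • f

/-- The operator `A_{f,g} : (k,c) ↦ (T_{f,g}(k), 0)` on `L' ⊕ ℂ`. -/
noncomputable def ALg (f g : Lprime) : Lprime × ℂ → Lprime × ℂ :=
  fun x => (TL f g x.1, 0)

/-- The operator `B_h : (k,c) ↦ (c·h, 0)` on `L' ⊕ ℂ`. -/
noncomputable def BLg (h : Lprime) : Lprime × ℂ → Lprime × ℂ :=
  fun x => (x.2 • h, 0)

/-- The span `𝔤 ≅ S²(H'_f) ⋉ H'_f` of the operators `A_{f,g}` and `B_h` inside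
`End(L' ⊕ ℂ)`. -/
noncomputable def gFrak : Submodule ℂ (Lprime × ℂ → Lprime × ℂ) :=
  Submodule.span ℂ
    ({A | ∃ f g : Lprime, A = ALg f g} ∪ {A | ∃ h : Lprime, A = BLg h})

/-! The pairing is `⟨f, g⟩ = -(f · θg)₀` for the Euler derivation `θ = t d/dt`; since `θ(fg)` has
no constant term, `⟨·,·⟩` is antisymmetric. Antisymmetry yields the bracket relations of
`S²(L') ⋉ L'`, computed on the operators as linear endomorphisms (where the commutator is
bilinear): `[A_{a,b}, A_{c,d}]` is a combination of `A`'s, `[A_{f,g}, B_h] = B_{T_{f,g} h}` and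
`[B_h, B_k] = 0`, so the span is closed. For perfectness take `u = t`, `v = t⁻¹`, with `⟨u, v⟩ = 1`:
then `[A_{u,u}, A_{v,v}] = 4 A_{u,v}`, and `A_{f,u}`, `A_{f,v}`, `A_{f,g}`, `B_h` are successively
solved for from one commutator each, modulo operators already obtained. -/

namespace LaurentSeries

variable (R : Type*) [CommRing R]

noncomputable def eulerOp : LaurentSeries R →ₗ[R] LaurentSeries R where
  toFun x :=
    { coeff := fun n => n * x.coeff n
      isPWO_support' := x.isPWO_support.mono fun n hn h => hn (by simp [h]) }
  map_add' x y := by ext n; simp [mul_add]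
  map_smul' r x := by ext n; simp [mul_left_comm]

variable {R}

@[simp]
theorem eulerOp_coeff (x : LaurentSeries R) (n : ℤ) : (eulerOp R x).coeff n = n * x.coeff n :=
  rfl

theorem support_eulerOp_subset (x : LaurentSeries R) : (eulerOp R x).support ⊆ x.support :=
  fun n hn h => hn (by simp [h])

theorem eulerOp_mul (x y : LaurentSeries R) :
    eulerOp R (x * y) = eulerOp R x * y + x * eulerOp R y := by
  ext n
  rw [HahnSeries.coeff_add, coeff_mul_left' x.isPWO_support (support_eulerOp_subset x),
    coeff_mul_right' y.isPWO_support (support_eulerOp_subset y), eulerOp_coeff,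
    HahnSeries.coeff_mul, Finset.mul_sum, ← Finset.sum_add_distrib]
  refine Finset.sum_congr rfl fun ij hij => ?_
  rw [← (Finset.mem_antidiagonal.1 hij).2.2]
  simp only [eulerOp_coeff]
  push_cast
  ring

@[simp]
theorem eulerOp_single (n : ℤ) (r : R) : eulerOp R (single n r) = single n (n * r) := by
  ext m
  by_cases h : m = n <;> simp [h]

end LaurentSeries

open LaurentSeries

theorem D_eq_single_mul_eulerOp (f : LaurentSeries ℂ) : D f = single (-1) 1 * eulerOp ℂ f := by
  ext n
  rw [show n = n + 1 + -1 by ring, coeff_single_mul_add, one_mul, eulerOp_coeff]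
  simp [D]

theorem resPair_eq_neg_coeff_mul_eulerOp (f g : LaurentSeries ℂ) :
    resPair f g = -(f * eulerOp ℂ g).coeff 0 := by
  have h := coeff_single_mul_add (r := (1 : ℂ)) (x := f * eulerOp ℂ g) (a := 0) (b := -1)
  rw [zero_add, one_mul] at h
  rw [resPair, D_eq_single_mul_eulerOp, mul_left_comm, h]

theorem resPair_antisymm (f g : LaurentSeries ℂ) : resPair g f = -resPair f g := by
  have h := congrArg (fun x => x.coeff 0) (eulerOp_mul f g)
  simp only [eulerOp_coeff, Int.cast_zero, zero_mul, HahnSeries.coeff_add] at h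
  rw [resPair_eq_neg_coeff_mul_eulerOp, resPair_eq_neg_coeff_mul_eulerOp, mul_comm g]
  linear_combination h

noncomputable def resPairRight (f : LaurentSeries ℂ) : LaurentSeries ℂ →ₗ[ℂ] ℂ where
  toFun := resPair f
  map_add' g h := by
    simp only [resPair_eq_neg_coeff_mul_eulerOp, map_add, mul_add, HahnSeries.coeff_add, neg_add]
  map_smul' c g := by
    rw [resPair_eq_neg_coeff_mul_eulerOp, resPair_eq_neg_coeff_mul_eulerOp, map_smul,
      ← C_mul_eq_smul, mul_left_comm, C_mul_eq_smul, HahnSeries.coeff_smul,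
      RingHom.id_apply, smul_neg]

@[simp]
theorem resPairRight_apply (f g : LaurentSeries ℂ) : resPairRight f g = resPair f g :=
  rfl

theorem resPair_single_one_single_neg_one :
    resPair (single 1 1) (single (-1) 1) = 1 := by
  rw [resPair_eq_neg_coeff_mul_eulerOp, eulerOp_single, single_mul_single]
  norm_num

theorem single_mem_Lprime {n : ℤ} (hn : n ≠ 0) (r : ℂ) : single n r ∈ Lprime :=
  ⟨coeff_single_of_ne (Ne.symm hn), (Set.finite_singleton n).subset support_single_subset⟩

theorem exists_resPair_eq_one : ∃ u v : Lprime, resPair u v = 1 :=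
  ⟨⟨_, single_mem_Lprime one_ne_zero 1⟩, ⟨_, single_mem_Lprime (by norm_num) 1⟩,
    resPair_single_one_single_neg_one⟩

-- Instance search fails to find `Submodule.addCommGroup` for `Lprime` when it is needed inside
-- `Module.End ℂ Lprime`, so it is registered directly.
noncomputable instance : AddCommGroup Lprime := Submodule.addCommGroup Lprime

attribute [local instance] LieRing.ofAssociativeRing

theorem Module.End.coe_lie {R M : Type*} [CommRing R] [AddCommGroup M] [Module R M]
    (A B : Module.End R M) : ⇑⁅A, B⁆ = fun x => A (B x) - B (A x) :=
  rfl

noncomputable def TLₗ (f g : Lprime) : Module.End ℂ Lprime :=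
  (resPairRight f ∘ₗ Lprime.subtype).smulRight g + (resPairRight g ∘ₗ Lprime.subtype).smulRight f

@[simp]
theorem TLₗ_apply (f g k : Lprime) : TLₗ f g k = TL f g k :=
  rfl

theorem lie_TLₗ_TLₗ (a b c d : Lprime) :
    ⁅TLₗ a b, TLₗ c d⁆ = resPair a d • TLₗ b c + resPair b d • TLₗ a c +
      resPair a c • TLₗ b d + resPair b c • TLₗ a d := by
  refine LinearMap.ext fun k => Subtype.ext ?_
  have hca := resPair_antisymm a c
  have hcb := resPair_antisymm b c
  have hda := resPair_antisymm a d
  have hdb := resPair_antisymm b d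
  simp only [Module.End.coe_lie, LinearMap.add_apply, LinearMap.smul_apply, TLₗ_apply, TL,
    Submodule.coe_sub, Submodule.coe_add, Submodule.coe_smul, ← resPairRight_apply, map_add,
    map_smul]
  simp only [resPairRight_apply, hca, hcb, hda, hdb]
  module

noncomputable def ALgₗ (f g : Lprime) : Module.End ℂ (Lprime × ℂ) :=
  LinearMap.inl ℂ Lprime ℂ ∘ₗ TLₗ f g ∘ₗ LinearMap.fst ℂ Lprime ℂ

noncomputable def BLgₗ : Lprime →ₗ[ℂ] Module.End ℂ (Lprime × ℂ) where
  toFun h := LinearMap.inl ℂ Lprime ℂ ∘ₗ (LinearMap.snd ℂ Lprime ℂ).smulRight h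
  map_add' h h' := by ext <;> simp
  map_smul' c h := by ext <;> simp

theorem coe_ALgₗ (f g : Lprime) : ⇑(ALgₗ f g) = ALg f g :=
  rfl

theorem coe_BLgₗ (h : Lprime) : ⇑(BLgₗ h) = BLg h :=
  rfl

theorem ALgₗ_comm (f g : Lprime) : ALgₗ f g = ALgₗ g f := by
  ext <;> simp [ALgₗ, TL, add_comm]

theorem lie_ALgₗ_ALgₗ (a b c d : Lprime) :
    ⁅ALgₗ a b, ALgₗ c d⁆ = resPair a d • ALgₗ b c + resPair b d • ALgₗ a c +
      resPair a c • ALgₗ b d + resPair b c • ALgₗ a d := by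
  refine LinearMap.ext fun x => Prod.ext ?_ (by simp [ALgₗ])
  simpa [Module.End.coe_lie, ALgₗ] using congrArg (· x.1) (lie_TLₗ_TLₗ a b c d)

theorem lie_ALgₗ_BLgₗ (f g h : Lprime) : ⁅ALgₗ f g, BLgₗ h⁆ = BLgₗ (TL f g h) := by
  ext <;> simp [Module.End.coe_lie, ALgₗ, BLgₗ]

theorem lie_BLgₗ_BLgₗ (h h' : Lprime) : ⁅BLgₗ h, BLgₗ h'⁆ = 0 := by
  ext <;> simp [Module.End.coe_lie, BLgₗ]

noncomputable def gFrakEnd : Submodule ℂ (Module.End ℂ (Lprime × ℂ)) :=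
  Submodule.span ℂ (Set.range (Function.uncurry ALgₗ) ∪ Set.range BLgₗ)

theorem ALgₗ_mem_gFrakEnd (f g : Lprime) : ALgₗ f g ∈ gFrakEnd :=
  Submodule.subset_span (Or.inl ⟨(f, g), rfl⟩)

theorem BLgₗ_mem_gFrakEnd (h : Lprime) : BLgₗ h ∈ gFrakEnd :=
  Submodule.subset_span (Or.inr ⟨h, rfl⟩)

theorem lie_mem_gFrakEnd {A B : Module.End ℂ (Lprime × ℂ)} (hA : A ∈ gFrakEnd)
    (hB : B ∈ gFrakEnd) : ⁅A, B⁆ ∈ gFrakEnd := by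
  suffices hle : Submodule.map₂ (LieAlgebra.ad ℂ (Module.End ℂ (Lprime × ℂ))).toLinearMap
      gFrakEnd gFrakEnd ≤ gFrakEnd from hle (Submodule.apply_mem_map₂ _ hA hB)
  rw [gFrakEnd, Submodule.map₂_span_span, Submodule.span_le]
  rintro _ ⟨_, ⟨⟨a, b⟩, rfl⟩ | ⟨h, rfl⟩, _, ⟨⟨c, d⟩, rfl⟩ | ⟨h', rfl⟩, rfl⟩ <;>
    simp only [LieHom.coe_toLinearMap, LieAlgebra.ad_apply, Function.uncurry_apply_pair,
      SetLike.mem_coe]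
  · have hsmul {f g : Lprime} (c : ℂ) : c • ALgₗ f g ∈ gFrakEnd :=
      Submodule.smul_mem _ c (ALgₗ_mem_gFrakEnd f g)
    rw [lie_ALgₗ_ALgₗ]
    exact add_mem (add_mem (add_mem (hsmul _) (hsmul _)) (hsmul _)) (hsmul _)
  · rw [lie_ALgₗ_BLgₗ]
    exact BLgₗ_mem_gFrakEnd _
  · rw [← lie_skew, lie_ALgₗ_BLgₗ]
    exact neg_mem (BLgₗ_mem_gFrakEnd _)
  · rw [lie_BLgₗ_BLgₗ]
    exact zero_mem _

noncomputable def gFrakEndDerived : Submodule ℂ (Module.End ℂ (Lprime × ℂ)) :=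
  Submodule.span ℂ
    (Set.image2 (fun A B => ⁅A, B⁆) (gFrakEnd : Set (Module.End ℂ (Lprime × ℂ))) gFrakEnd)

theorem lie_mem_gFrakEndDerived {A B : Module.End ℂ (Lprime × ℂ)} (hA : A ∈ gFrakEnd)
    (hB : B ∈ gFrakEnd) : ⁅A, B⁆ ∈ gFrakEndDerived :=
  Submodule.subset_span (Set.mem_image2_of_mem (f := fun A B => ⁅A, B⁆) hA hB)

section Perfect

variable {u v : Lprime}

theorem BLgₗ_mem_gFrakEndDerived (huv : resPair u v = 1) (h : Lprime) :
    BLgₗ h ∈ gFrakEndDerived := by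
  have hh : BLgₗ h = ⁅ALgₗ h u, BLgₗ v⁆ - (resPair h v / 2) • ⁅ALgₗ u u, BLgₗ v⁆ := by
    rw [lie_ALgₗ_BLgₗ, lie_ALgₗ_BLgₗ, ← map_smul, ← map_sub]
    congr 1
    ext1
    simp only [TL, huv, one_smul, smul_add, AddSubgroupClass.coe_sub, Submodule.coe_add,
      SetLike.val_smul]
    module
  have hAB {f g k : Lprime} : ⁅ALgₗ f g, BLgₗ k⁆ ∈ gFrakEndDerived :=
    lie_mem_gFrakEndDerived (ALgₗ_mem_gFrakEnd _ _) (BLgₗ_mem_gFrakEnd _)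
  rw [hh]
  exact sub_mem hAB (Submodule.smul_mem _ _ hAB)

theorem ALgₗ_mem_gFrakEndDerived (huv : resPair u v = 1) (f g : Lprime) :
    ALgₗ f g ∈ gFrakEndDerived := by
  have hvu : resPair v u = -1 := by rw [resPair_antisymm, huv]
  have hAA {a b c d : Lprime} : ⁅ALgₗ a b, ALgₗ c d⁆ ∈ gFrakEndDerived :=
    lie_mem_gFrakEndDerived (ALgₗ_mem_gFrakEnd _ _) (ALgₗ_mem_gFrakEnd _ _)
  have hAuv : ALgₗ u v ∈ gFrakEndDerived := by
    have : ALgₗ u v = (4 : ℂ)⁻¹ • ⁅ALgₗ u u, ALgₗ v v⁆ := by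
      rw [lie_ALgₗ_ALgₗ, huv]
      module
    exact this ▸ Submodule.smul_mem _ _ hAA
  have hfu {f : Lprime} : ALgₗ f u ∈ gFrakEndDerived := by
    have : ALgₗ f u = resPair f u • ALgₗ u v - (2 : ℂ)⁻¹ • ⁅ALgₗ f v, ALgₗ u u⁆ := by
      rw [lie_ALgₗ_ALgₗ, hvu, ALgₗ_comm v u]
      module
    exact this ▸ sub_mem (Submodule.smul_mem _ _ hAuv) (Submodule.smul_mem _ _ hAA)
  have hfv {f : Lprime} : ALgₗ f v ∈ gFrakEndDerived := by
    have : ALgₗ f v = (2 : ℂ)⁻¹ • ⁅ALgₗ f u, ALgₗ v v⁆ - resPair f v • ALgₗ u v := by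
      rw [lie_ALgₗ_ALgₗ, huv]
      module
    exact this ▸ sub_mem (Submodule.smul_mem _ _ hAA) (Submodule.smul_mem _ _ hAuv)
  have : ALgₗ f g = resPair f u • ALgₗ g v + resPair f g • ALgₗ u v + resPair v g • ALgₗ f u
      - ⁅ALgₗ f v, ALgₗ g u⁆ := by
    rw [lie_ALgₗ_ALgₗ, hvu, ALgₗ_comm v g, ALgₗ_comm v u]
    module
  rw [this]
  exact sub_mem (add_mem (add_mem (Submodule.smul_mem _ _ hfv) (Submodule.smul_mem _ _ hAuv))
    (Submodule.smul_mem _ _ hfu)) hAA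

end Perfect

theorem gFrakEndDerived_eq : gFrakEndDerived = gFrakEnd := by
  refine le_antisymm (Submodule.span_le.2 ?_) ?_
  · rintro _ ⟨A, hA, B, hB, rfl⟩
    exact lie_mem_gFrakEnd hA hB
  · obtain ⟨u, v, huv⟩ := exists_resPair_eq_one
    refine Submodule.span_le.2 ?_
    rintro _ (⟨⟨f, g⟩, rfl⟩ | ⟨h, rfl⟩)
    · exact ALgₗ_mem_gFrakEndDerived huv f g
    · exact BLgₗ_mem_gFrakEndDerived huv h

theorem gFrak_eq_map : gFrak = gFrakEnd.map (LinearMap.ltoFun ℂ (Lprime × ℂ) (Lprime × ℂ) ℂ) := by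
  rw [gFrakEnd, Submodule.map_span, Set.image_union, ← Set.range_comp, ← Set.range_comp, gFrak]
  congr 2 <;> ext A <;> simp [coe_ALgₗ, coe_BLgₗ, eq_comm]

theorem mem_gFrak_iff {A : Lprime × ℂ → Lprime × ℂ} : A ∈ gFrak ↔ ∃ A' ∈ gFrakEnd, ⇑A' = A := by
  simp [gFrak_eq_map]

theorem commutator_mem_gFrak {A B : Lprime × ℂ → Lprime × ℂ} (hA : A ∈ gFrak) (hB : B ∈ gFrak) :
    (fun x => A (B x) - B (A x)) ∈ gFrak := by
  obtain ⟨A, hA', rfl⟩ := mem_gFrak_iff.1 hA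
  obtain ⟨B, hB', rfl⟩ := mem_gFrak_iff.1 hB
  exact mem_gFrak_iff.2 ⟨_, lie_mem_gFrakEnd hA' hB', Module.End.coe_lie A B⟩

theorem commutators_gFrak_eq_image :
    {X : Lprime × ℂ → Lprime × ℂ | ∃ A ∈ gFrak, ∃ B ∈ gFrak, X = fun x => A (B x) - B (A x)} =
      LinearMap.ltoFun ℂ (Lprime × ℂ) (Lprime × ℂ) ℂ ''
        Set.image2 (fun A B => ⁅A, B⁆) (gFrakEnd : Set (Module.End ℂ (Lprime × ℂ))) gFrakEnd := by
  ext X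
  constructor
  · rintro ⟨_, hA, _, hB, rfl⟩
    obtain ⟨A, hA', rfl⟩ := mem_gFrak_iff.1 hA
    obtain ⟨B, hB', rfl⟩ := mem_gFrak_iff.1 hB
    exact ⟨⁅A, B⁆, ⟨A, hA', B, hB', rfl⟩, Module.End.coe_lie A B⟩
  · rintro ⟨_, ⟨A, hA, B, hB, rfl⟩, rfl⟩
    exact ⟨A, mem_gFrak_iff.2 ⟨A, hA, rfl⟩, B, mem_gFrak_iff.2 ⟨B, hB, rfl⟩,
      Module.End.coe_lie A B⟩

/-- the span `𝔤` of the operators `A_{f,g}` and `B_h` on `L' ⊕ ℂ` is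
closed under the commutator bracket and is perfect: `[𝔤, 𝔤] = 𝔤`. -/
theorem gFrak_closed_and_perfect :
    (∀ A ∈ gFrak, ∀ B ∈ gFrak, (fun x => A (B x) - B (A x)) ∈ gFrak) ∧
    gFrak = Submodule.span ℂ
      {X : Lprime × ℂ → Lprime × ℂ | ∃ A ∈ gFrak, ∃ B ∈ gFrak,
        X = fun x => A (B x) - B (A x)} := by
  refine ⟨fun A hA B hB => commutator_mem_gFrak hA hB, ?_⟩
  rw [commutators_gFrak_eq_image, ← Submodule.map_span, ← gFrakEndDerived, gFrakEndDerived_eq,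
    gFrak_eq_map]
end

section
/- For f, g ∈ ℂ((t)) and m ≥ 0, set c_m(f,g) := (coefficient of t^m in f·π₋(g·t^m)) − (coefficient of t^m in g·π₋(f·t^m)), where π₋ : ℂ((t)) → H₋ is the principal-part projection. Then the function m ↦ c_m(f,g) is finitely supported and its sum equals ⟨f,g⟩ = −Res_{t=0}(f·g'). In other words, the restriction of the canonical two-cocycle ψ of gl(H) to the multiplication operators M_f, M_g on H satisfies ψ(M_f, M_g) = ⟨f,g⟩, so the Heisenberg algebra is the central extension of H' defined by the restriction of ψ. -/
/-!
Write `a k = f_k g_{-k}`. Since `π₋(g t^m)` keeps the coefficients `g_{-k}` with `k > m`, the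
`m`-th diagonal coefficient is `∑_{k > m} (a k - a (-k))`, a finite sum that vanishes once `m`
exceeds the pole orders of `f` and `g`. Summing over `m` counts each `k > 0` exactly `k`
times, giving `∑_{k > 0} k (a k - a (-k)) = ∑_k k a k`, and this is `-Res (f g')` because the
coefficient of `t^{-k-1}` in `g'` is `-k g_{-k}`.
-/

open HahnSeries

/-- Truncation to strictly negative degrees (the principal part). -/
noncomputable def truncNeg (f : LaurentSeries ℂ) : LaurentSeries ℂ where
  coeff := fun n => if n < 0 then f.coeff n else 0
  isPWO_support' := f.isPWO_support.mono (fun n hn => by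
    simp only [Function.mem_support] at hn
    by_cases h : n < 0
    · simp only [h, if_true] at hn
      exact hn
    · simp [h] at hn)

/-- Truncation to strictly positive degrees. -/
noncomputable def truncPos (f : LaurentSeries ℂ) : LaurentSeries ℂ where
  coeff := fun n => if 0 < n then f.coeff n else 0
  isPWO_support' := f.isPWO_support.mono (fun n hn => by
    simp only [Function.mem_support] at hn
    by_cases h : 0 < n
    · simp only [h, if_true] at hn
      exact hn
    · simp [h] at hn)

lemma truncNeg_coeff (f : LaurentSeries ℂ) (n : ℤ) :
    (truncNeg f).coeff n = if n < 0 then f.coeff n else 0 := rfl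

/-- The diagonal matrix coefficient at `t^m` of `M_f ∘ π₋ ∘ M_g − M_g ∘ π₋ ∘ M_f`,
where `M_f` is multiplication by `f`. -/
noncomputable def psiHeis (f g : LaurentSeries ℂ) (m : ℕ) : ℂ :=
  (f * truncNeg (g * HahnSeries.single (m : ℤ) (1 : ℂ))).coeff (m : ℤ) -
    (g * truncNeg (f * HahnSeries.single (m : ℤ) (1 : ℂ))).coeff (m : ℤ)

open Filter Finset

theorem HahnSeries.coeff_mul_eq_sum_of_subset {Γ R : Type*} [PartialOrder Γ] [AddCommGroup Γ]
    [IsOrderedAddMonoid Γ] [NonUnitalNonAssocSemiring R] (x y : HahnSeries Γ R) (a : Γ)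
    (s : Finset Γ) (hs : ∀ i ∉ s, x.coeff i * y.coeff (a - i) = 0) :
    (x * y).coeff a = ∑ i ∈ s, x.coeff i * y.coeff (a - i) := by
  have hsnd : ∀ ij ∈ antidiagonal x.isPWO_support y.isPWO_support a, ij.2 = a - ij.1 :=
    fun ij hij => eq_sub_of_add_eq' (mem_antidiagonal.mp hij).2.2
  rw [coeff_mul]
  refine sum_bij_ne_zero (fun ij _ _ => ij.1) (fun ij hij hne => ?_)
    (fun ij hij _ kl hkl _ h => Prod.ext h ?_) (fun i _ hne => ?_) (fun ij hij _ => ?_)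
  · by_contra hi
    rw [hsnd ij hij, hs _ hi] at hne
    exact hne rfl
  · rw [hsnd ij hij, hsnd kl hkl, h]
  · exact ⟨(i, a - i), mem_antidiagonal.mpr
      ⟨left_ne_zero_of_mul hne, right_ne_zero_of_mul hne, add_sub_cancel _ _⟩, hne, rfl⟩
  · rw [hsnd ij hij]

theorem LaurentSeries.eventually_coeff_eq_zero_of_lt_neg {R : Type*} [Semiring R]
    (f : LaurentSeries R) : ∀ᶠ K : ℕ in atTop, ∀ i < -(K : ℤ), f.coeff i = 0 := by
  filter_upwards [eventually_ge_atTop (-f.order).toNat] with K hK i hi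
  exact coeff_eq_zero_of_lt_order (by omega)

theorem Finset.sum_Icc_neg_comp_neg {M : Type*} [AddCommMonoid M] (K : ℤ) (φ : ℤ → M) :
    ∑ i ∈ Icc (-K) K, φ (-i) = ∑ i ∈ Icc (-K) K, φ i :=
  sum_nbij' Neg.neg Neg.neg (fun i hi => by simp only [mem_Icc] at *; omega)
    (fun i hi => by simp only [mem_Icc] at *; omega) (fun i _ => neg_neg i)
    (fun i _ => neg_neg i) (fun _ _ => rfl)

theorem Finset.sum_range_ite_natCast_lt {M : Type*} [AddCommMonoid M] (c : M) {K : ℕ} {i : ℤ}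
    (hi : i ≤ K) : ∑ m ∈ range K, (if (m : ℤ) < i then c else 0) = i.toNat • c := by
  rw [← sum_filter, sum_const]
  congr
  convert card_range i.toNat
  ext m
  simp only [mem_filter, mem_range]
  omega

theorem Finset.sum_Icc_toNat_mul_sub_neg {R : Type*} [CommRing R] (K : ℤ) (a : ℤ → R) :
    ∑ i ∈ Icc (-K) K, (i.toNat : R) * (a i - a (-i)) = ∑ i ∈ Icc (-K) K, (i : R) * a i := by
  have hreflect : ∑ i ∈ Icc (-K) K, (i.toNat : R) * a (-i)
      = ∑ i ∈ Icc (-K) K, ((-i).toNat : R) * a i := by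
    simpa using sum_Icc_neg_comp_neg K fun i => ((-i).toNat : R) * a i
  simp_rw [mul_sub, sum_sub_distrib, hreflect, ← sum_sub_distrib, ← sub_mul]
  refine sum_congr rfl fun i _ => ?_
  have hcast := congrArg (Int.cast : ℤ → R) (Int.toNat_sub_toNat_neg i)
  push_cast at hcast
  rw [hcast]

section PrincipalPart

variable {f g : LaurentSeries ℂ} {K : ℕ}

theorem coeff_mul_coeff_neg_eq_zero_of_notMem_Icc (hf : ∀ i < -(K : ℤ), f.coeff i = 0)
    (hg : ∀ i < -(K : ℤ), g.coeff i = 0) {i : ℤ} (hi : i ∉ Icc (-(K : ℤ)) K) :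
    f.coeff i * g.coeff (-i) = 0 := by
  rcases not_and_or.mp (mt mem_Icc.mpr hi) with h | h
  · rw [hf i (not_le.mp h), zero_mul]
  · rw [hg (-i) (by omega), mul_zero]

theorem coeff_mul_truncNeg_mul_single (hf : ∀ i < -(K : ℤ), f.coeff i = 0)
    (hg : ∀ i < -(K : ℤ), g.coeff i = 0) (m : ℕ) :
    (f * truncNeg (g * single (m : ℤ) 1)).coeff m
      = ∑ i ∈ Icc (-(K : ℤ)) K, if (m : ℤ) < i then f.coeff i * g.coeff (-i) else 0 := by
  have hterm : ∀ i : ℤ, f.coeff i * (truncNeg (g * single (m : ℤ) 1)).coeff (m - i)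
      = if (m : ℤ) < i then f.coeff i * g.coeff (-i) else 0 := fun i => by
    rw [truncNeg_coeff, coeff_mul_single, mul_one, sub_sub_cancel_left, mul_ite, mul_zero]
    simp only [sub_neg]
  rw [coeff_mul_eq_sum_of_subset _ _ _ (Icc (-(K : ℤ)) K) fun i hi => ?_]
  · simp_rw [hterm]
  rw [hterm]
  split_ifs
  exacts [coeff_mul_coeff_neg_eq_zero_of_notMem_Icc hf hg hi, rfl]

theorem psiHeis_eq_sum (hf : ∀ i < -(K : ℤ), f.coeff i = 0)
    (hg : ∀ i < -(K : ℤ), g.coeff i = 0) (m : ℕ) :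
    psiHeis f g m = ∑ i ∈ Icc (-(K : ℤ)) K,
      if (m : ℤ) < i then f.coeff i * g.coeff (-i) - f.coeff (-i) * g.coeff i else 0 := by
  rw [psiHeis, coeff_mul_truncNeg_mul_single hf hg, coeff_mul_truncNeg_mul_single hg hf,
    ← sum_sub_distrib]
  refine sum_congr rfl fun i _ => ?_
  split_ifs <;> ring

theorem resPair_eq_sum (hf : ∀ i < -(K : ℤ), f.coeff i = 0)
    (hg : ∀ i < -(K : ℤ), g.coeff i = 0) :
    resPair f g = ∑ i ∈ Icc (-(K : ℤ)) K, (i : ℂ) * (f.coeff i * g.coeff (-i)) := by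
  have hterm : ∀ i : ℤ,
      f.coeff i * (D g).coeff (-1 - i) = -((i : ℂ) * (f.coeff i * g.coeff (-i))) := fun i => by
    rw [show (D g).coeff (-1 - i) = ((-1 - i + 1 : ℤ) : ℂ) * g.coeff (-1 - i + 1) from rfl,
      show -1 - i + 1 = -i by ring]
    push_cast
    ring
  rw [resPair, coeff_mul_eq_sum_of_subset _ _ _ (Icc (-(K : ℤ)) K) fun i hi => ?_]
  · simp_rw [hterm, sum_neg_distrib, neg_neg]
  rw [hterm, coeff_mul_coeff_neg_eq_zero_of_notMem_Icc hf hg hi, mul_zero, neg_zero]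

end PrincipalPart

/-- the diagonal coefficients computing the canonical two-cocycle
`ψ(M_f, M_g) = Tr(π₊M_fπ₋M_gπ₊ − π₊M_gπ₋M_fπ₊)` on multiplication operators are
finitely supported over the monomial basis `{t^m : m ≥ 0}` of `H₊`, and their sum
equals the residue pairing `⟨f,g⟩ = −Res_{t=0}(f·g')`: the Heisenberg algebra is
the central extension of `H'` defined by the restriction of `ψ`. -/
theorem psi_on_multiplication_operators (f g : LaurentSeries ℂ) :
    (Function.support fun m : ℕ => psiHeis f g m).Finite ∧
    ∑ᶠ m : ℕ, psiHeis f g m = resPair f g := by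
  obtain ⟨K, hf, hg⟩ := (f.eventually_coeff_eq_zero_of_lt_neg.and
    g.eventually_coeff_eq_zero_of_lt_neg).exists
  have hsupp : (Function.support fun m : ℕ => psiHeis f g m) ⊆ range K := by
    intro m hm
    by_contra hmK
    refine hm ((psiHeis_eq_sum hf hg m).trans (sum_eq_zero fun i hi => if_neg ?_))
    simp only [coe_range, Set.mem_Iio, not_lt, mem_Icc] at hmK hi
    omega
  refine ⟨(range K).finite_toSet.subset hsupp, ?_⟩
  rw [finsum_eq_sum_of_support_subset _ hsupp, resPair_eq_sum hf hg, ← sum_Icc_toNat_mul_sub_neg]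
  simp_rw [psiHeis_eq_sum hf hg]
  rw [sum_comm]
  refine sum_congr rfl fun i hi => ?_
  rw [sum_range_ite_natCast_lt _ (mem_Icc.mp hi).2, nsmul_eq_mul, neg_neg]
end
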